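/- arXiv:2408.00391 — 3 statements merged into one kernel-verified Lean document; each statement's English description precedes it below -/
import Mathlib

section
/- For the Lie algebra sl2 with its 3-cocycle κ(x,y,z) = (x,[y,z]) defined via the rescaled Killing form with (x_3,x_3)=1, (x_+,x_-)=(x_-,x_+)=1/2, and the invariant symmetric tensor π = λ(x_+ ⊙ x_- + (1/4) x_3 ⊙ x_3) with λ ≠ 0, there exists NO linear map π̃: sl2 → sl2 satisfying both (π̃⊗id)(π) + (id⊗π̃)(π) = 0 and π̃([x,y]) = [π̃(x),y] + [x,π̃(y)] + (κ(x,y,-)⊗id)(π) + (id⊗κ(x,y,-))(π) for all x,y ∈ sl2. -/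
open TensorProduct

/-! With `x₊ = e 0`, `x₋ = e 1`, `x₃ = e 2`: the `x₊`-coordinate of the derivation identity at
`(x₃, x₊)` forces the `x₃`-coordinate of `π̃ x₃` to be `-λ`, since each of the two contractions of `π`
with `κ(x₃, x₊, -)` equals `λ x₊`. The `x₃ ⊗ x₃`-coefficient of `(π̃ ⊗ id + id ⊗ π̃) π` is `λ` times
that same coordinate, so the invariance condition gives `λ² = 0`. -/

section Contraction

variable {K L : Type*} [CommSemiring K] [AddCommMonoid L] [Module K L]

theorem lid_rTensor_smul_symm_tmul (φ : L →ₗ[K] K) (lam μ : K) (a b c : L) :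
    TensorProduct.lid K L (φ.rTensor L (lam • (a ⊗ₜ b + b ⊗ₜ a + μ • (c ⊗ₜ c)))) =
      lam • (φ a • b + φ b • a + μ • φ c • c) := by
  simp

theorem rid_lTensor_smul_symm_tmul (φ : L →ₗ[K] K) (lam μ : K) (a b c : L) :
    TensorProduct.rid K L (φ.lTensor L (lam • (a ⊗ₜ b + b ⊗ₜ a + μ • (c ⊗ₜ c)))) =
      lam • (φ a • b + φ b • a + μ • φ c • c) := by
  simp [add_comm (lam • φ b • a)]

end Contraction

section AlternatingForm

variable {K L : Type*} [CommRing K] [AddCommGroup L] [Module K L] {κ : L →ₗ[K] L →ₗ[K] L →ₗ[K] K}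

theorem LinearMap.apply_apply_apply_cyclic (hκ₁ : ∀ u v w : L, κ u v w = - κ v u w)
    (hκ₂ : ∀ u v w : L, κ u v w = - κ u w v) (u v w : L) : κ w u v = κ u v w := by
  rw [hκ₁, hκ₂, neg_neg]

theorem LinearMap.apply_apply_self_eq_zero [NoZeroDivisors K] [CharZero K]
    (hκ : ∀ u v w : L, κ u v w = - κ u w v) (u v : L) : κ u v v = 0 :=
  CharZero.eq_neg_self_iff.mp (hκ u v v)

theorem LinearMap.apply_self_apply_eq_zero [NoZeroDivisors K] [CharZero K]
    (hκ₁ : ∀ u v w : L, κ u v w = - κ v u w) (hκ₂ : ∀ u v w : L, κ u v w = - κ u w v) (u v : L) :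
    κ u v u = 0 := by
  rw [hκ₁, LinearMap.apply_apply_self_eq_zero hκ₂, neg_zero]

end AlternatingForm

namespace Sl2

variable {K L : Type*} [Field K] [LieRing L] [LieAlgebra K L] (e : Module.Basis (Fin 3) K L)

theorem coord_zero_lie_two (h20 : ⁅e 2, e 0⁆ = (2 : K) • e 0) (h21 : ⁅e 2, e 1⁆ = (-2 : K) • e 1)
    (v : L) : e.coord 0 ⁅e 2, v⁆ = 2 * e.coord 0 v := by
  have hcomp : (e.coord 0).comp (LieAlgebra.ad K L (e 2)) = (2 : K) • e.coord 0 :=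
    e.ext fun i => by fin_cases i <;> simp [h20, h21]
  simpa using LinearMap.congr_fun hcomp v

theorem coord_zero_lie_zero_right (h01 : ⁅e 0, e 1⁆ = e 2) (h20 : ⁅e 2, e 0⁆ = (2 : K) • e 0)
    (v : L) : e.coord 0 ⁅v, e 0⁆ = 2 * e.coord 2 v := by
  have hcomp : (e.coord 0).comp (LieAlgebra.ad K L (e 0)) = (-2 : K) • e.coord 2 :=
    e.ext fun i => by fin_cases i <;> simp [h01, ← lie_skew (e 0) (e 2), h20]
  have h := LinearMap.congr_fun hcomp v
  simp only [LinearMap.comp_apply, LieAlgebra.ad_apply, LinearMap.smul_apply, smul_eq_mul] at h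
  rw [← lie_skew, map_neg, h, neg_mul, neg_neg]

theorem coord_two_apply_two_eq_neg [CharZero K] (h01 : ⁅e 0, e 1⁆ = e 2)
    (h20 : ⁅e 2, e 0⁆ = (2 : K) • e 0) (h21 : ⁅e 2, e 1⁆ = (-2 : K) • e 1) (p : L →ₗ[K] L) (lam : K)
    (hp : p ⁅e 2, e 0⁆ = ⁅p (e 2), e 0⁆ + ⁅e 2, p (e 0)⁆ + lam • e 0 + lam • e 0) :
    e.coord 2 (p (e 2)) = -lam := by
  have h := congrArg (e.coord 0) hp
  rw [h20, map_add, map_add, map_add, coord_zero_lie_zero_right e h01 h20,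
    coord_zero_lie_two e h20 h21] at h
  simp only [map_smul, Module.Basis.coord_apply, Module.Basis.repr_self,
    Finsupp.single_eq_same, smul_eq_mul, mul_one] at h
  rw [Module.Basis.coord_apply]
  linear_combination -h / 2

theorem coord_two_tensor_coord_two_rTensor_add_lTensor [CharZero K] (p : L →ₗ[K] L) (lam : K) :
    TensorProduct.lid K K (TensorProduct.map (e.coord 2) (e.coord 2)
      ((LinearMap.rTensor L p + LinearMap.lTensor L p)
        (lam • (e 0 ⊗ₜ[K] e 1 + e 1 ⊗ₜ[K] e 0 + (2 : K)⁻¹ • (e 2 ⊗ₜ[K] e 2))))) =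
      lam * e.coord 2 (p (e 2)) := by
  simp only [smul_add, LinearMap.add_apply, map_add, map_smul, LinearMap.rTensor_tmul,
    LinearMap.lTensor_tmul, map_tmul, Module.Basis.coord_apply, Module.Basis.repr_self,
    Finsupp.single_eq_of_ne, tmul_zero, smul_zero, add_zero, Finsupp.single_eq_same, zero_add,
    zero_tmul, lid_tmul, smul_eq_mul, mul_one, one_mul, ne_eq, Fin.reduceEq, not_false_eq_true]
  ring

end Sl2

/-- For `sl₂` with the 3-cocycle `κ(x,y,z) = (x,[y,z])` given by the
rescaled Killing form (so `κ(x₊,x₋,x₃) = 1`), and the invariant symmetric tensor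
`π = λ(x₊ ⊙ x₋ + (1/4) x₃ ⊙ x₃)` with `λ ≠ 0`, there exists NO linear map
`π̃ : sl₂ → sl₂` satisfying both `(π̃⊗id)(π) + (id⊗π̃)(π) = 0` and
`π̃([x,y]) = [π̃x,y] + [x,π̃y] + (κ(x,y,-)⊗id)(π) + (id⊗κ(x,y,-))(π)`. -/
theorem stmt_3 {K : Type*} [Field K] [CharZero K]
    {L : Type*} [LieRing L] [LieAlgebra K L]
    (e : Module.Basis (Fin 3) K L)
    (h01 : ⁅e 0, e 1⁆ = e 2)
    (h20 : ⁅e 2, e 0⁆ = (2 : K) • e 0)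
    (h21 : ⁅e 2, e 1⁆ = (-2 : K) • e 1)
    (κ : L →ₗ[K] L →ₗ[K] L →ₗ[K] K)
    (hκ1 : ∀ u v w : L, κ u v w = - κ v u w)
    (hκ2 : ∀ u v w : L, κ u v w = - κ u w v)
    (hκval : κ (e 0) (e 1) (e 2) = 1)
    (lam : K) (hlam : lam ≠ 0)
    (π : L ⊗[K] L)
    (hπ : π = lam • (e 0 ⊗ₜ[K] e 1 + e 1 ⊗ₜ[K] e 0 + (2 : K)⁻¹ • (e 2 ⊗ₜ[K] e 2))) :
    ¬ ∃ p : L →ₗ[K] L,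
        (LinearMap.rTensor L p + LinearMap.lTensor L p) π = 0 ∧
        ∀ x y : L,
          p ⁅x, y⁆ = ⁅p x, y⁆ + ⁅x, p y⁆
            + (TensorProduct.lid K L) (LinearMap.rTensor L (κ x y) π)
            + (TensorProduct.rid K L) (LinearMap.lTensor L (κ x y) π) := by
  rintro ⟨p, hinv, hder⟩
  subst hπ
  have hcontract : lam • (κ (e 2) (e 0) (e 0) • e 1 + κ (e 2) (e 0) (e 1) • e 0
      + (2 : K)⁻¹ • κ (e 2) (e 0) (e 2) • e 2) = lam • e 0 := by
    rw [LinearMap.apply_apply_self_eq_zero hκ2, LinearMap.apply_self_apply_eq_zero hκ1 hκ2,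
      LinearMap.apply_apply_apply_cyclic hκ1 hκ2, hκval]
    simp
  have hdiag := hder (e 2) (e 0)
  rw [lid_rTensor_smul_symm_tmul, rid_lTensor_smul_symm_tmul, hcontract] at hdiag
  have hcoeff := congrArg
    (fun t => TensorProduct.lid K K (TensorProduct.map (e.coord 2) (e.coord 2) t)) hinv
  simp only [Sl2.coord_two_tensor_coord_two_rTensor_add_lTensor, map_zero,
    Sl2.coord_two_apply_two_eq_neg e h01 h20 h21 p lam hdiag] at hcoeff
  exact hlam (by simpa using hcoeff)
end

section
/- Let heis be the Heisenberg Lie algebra with basis x, y, z, bracket [x,y]=z, and 3-cocycle κ with κ(x,y,z)=1 (totally antisymmetric, all other basis evaluations determined by antisymmetry or zero). Fix λ ≠ 0 and let π = (λ/2) z ⊙ z. Then a linear map π̃: heis → heis satisfies (π̃⊗id)(π)+(id⊗π̃)(π)=0 and π̃([u,v]) = [π̃(u),v]+[u,π̃(v)] + (κ(u,v,-)⊗id)(π)+(id⊗κ(u,v,-))(π) for all u,v ∈ heis, if and only if π̃(z)=0 and there exist a,b,c,d,e ∈ K with π̃(x)=a x + b y + c z and π̃(y)=d x - (a+λ) y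 + e z. -/
/-!
Write `ω = x* ∧ y*` for the coordinate 2-form of the basis `x, y, z`. Then `⁅u, v⁆ = ω(u, v) z`
and, by antisymmetry, `κ(u, v, z) = ω(u, v)`, so both contractions of `π = (λ/2) z ⊗ z` with
`κ(u, v, -)` add up to `λ ω(u, v) z`. The first condition reads
`(λ/2) (π̃ z ⊗ z + z ⊗ π̃ z) = 0`, which in characteristic `≠ 2` forces `π̃ z = 0`; then
`π̃ ⁅u, v⁆ = 0`, and since `ω(A u, v) + ω(u, A v) = tr(A) ω(u, v)` on the plane spanned by `x, y`,
the twisted derivation property says exactly that the `x`-coefficient of `π̃ x` plus the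
`y`-coefficient of `π̃ y` equals `-λ`.
-/

open TensorProduct Module

theorem Module.Basis.exists_eq_fin_three {K M : Type*} [CommRing K] [AddCommGroup M] [Module K M]
    (e : Basis (Fin 3) K M) (w : M) : ∃ a b c : K, w = a • e 0 + b • e 1 + c • e 2 :=
  ⟨e.repr w 0, e.repr w 1, e.repr w 2, by
    rw [← Fin.sum_univ_three (fun i => e.repr w i • e i), e.sum_repr]⟩

theorem Module.Basis.exists_fin_three_iff {K M : Type*} [CommRing K] [AddCommGroup M]
    [Module K M] (e : Basis (Fin 3) K M) (t : K) (w₀ w₁ : M) :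
    (∃ a b c d f : K, w₀ = a • e 0 + b • e 1 + c • e 2 ∧ w₁ = d • e 0 + (-(a + t)) • e 1 + f • e 2)
      ↔ e.repr w₀ 0 + e.repr w₁ 1 = -t := by
  constructor
  · rintro ⟨a, b, c, d, f, rfl, rfl⟩
    simp
  · intro h
    obtain ⟨a, b, c, rfl⟩ := e.exists_eq_fin_three w₀
    obtain ⟨d, g, f, rfl⟩ := e.exists_eq_fin_three w₁
    refine ⟨a, b, c, d, f, rfl, ?_⟩
    have hg : a + g = -t := by simpa using h
    rw [show g = -(a + t) by linear_combination hg]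

theorem tmul_add_tmul_eq_zero_iff {K V : Type*} [Field K] [CharZero K] [AddCommGroup V]
    [Module K V] {z w : V} (hz : z ≠ 0) : w ⊗ₜ[K] z + z ⊗ₜ[K] w = 0 ↔ w = 0 := by
  refine ⟨fun h => ?_, fun h => by simp [h]⟩
  obtain ⟨f, hf⟩ := Projective.exists_dual_eq_one K hz
  have hw : f w • z + w = 0 := by
    simpa [hf] using congrArg (TensorProduct.lid K V ∘ LinearMap.rTensor V f) h
  have hfw : f w = 0 := add_self_eq_zero.mp (by simpa [hf] using congrArg f hw)
  simpa [hfw] using hw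

section Heisenberg

variable {K L : Type*} [Field K] [LieRing L] [LieAlgebra K L] (e : Basis (Fin 3) K L)

noncomputable def heisForm (u v : L) : K := e.repr u 0 * e.repr v 1 - e.repr u 1 * e.repr v 0

theorem heisForm_map_add_heisForm_map {p : L →ₗ[K] L} (hp : p (e 2) = 0) (u v : L) :
    heisForm e (p u) v + heisForm e u (p v) =
      (e.repr (p (e 0)) 0 + e.repr (p (e 1)) 1) * heisForm e u v := by
  have hrepr (w : L) (i : Fin 3) : e.repr (p w) i =
      e.repr w 0 * e.repr (p (e 0)) i + e.repr w 1 * e.repr (p (e 1)) i := by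
    obtain ⟨a, b, c, rfl⟩ := e.exists_eq_fin_three w
    simp [hp]
  simp only [heisForm]
  rw [hrepr u 0, hrepr u 1, hrepr v 0, hrepr v 1]
  ring

theorem heisForm_fin_three (a b c a' b' c' : K) :
    heisForm e (a • e 0 + b • e 1 + c • e 2) (a' • e 0 + b' • e 1 + c' • e 2) =
      a * b' - b * a' := by
  simp [heisForm]

variable {e}

theorem lie_eq_heisForm_smul (h01 : ⁅e 0, e 1⁆ = e 2) (h02 : ⁅e 0, e 2⁆ = 0)
    (h12 : ⁅e 1, e 2⁆ = 0) (u v : L) : ⁅u, v⁆ = heisForm e u v • e 2 := by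
  have h10 : ⁅e 1, e 0⁆ = -e 2 := by rw [← lie_skew, h01]
  have h20 : ⁅e 2, e 0⁆ = 0 := by rw [← lie_skew, h02, neg_zero]
  have h21 : ⁅e 2, e 1⁆ = 0 := by rw [← lie_skew, h12, neg_zero]
  obtain ⟨a, b, c, rfl⟩ := e.exists_eq_fin_three u
  obtain ⟨a', b', c', rfl⟩ := e.exists_eq_fin_three v
  rw [heisForm_fin_three]
  simp only [add_lie, lie_add, smul_lie, lie_smul, lie_self, h01, h02, h12, h10, h20, h21]
  module

theorem apply_apply_basis_two_eq_heisForm [CharZero K] {κ : L →ₗ[K] L →ₗ[K] L →ₗ[K] K}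
    (hκ1 : ∀ u v w : L, κ u v w = - κ v u w) (hκ2 : ∀ u v w : L, κ u v w = - κ u w v)
    (hκval : κ (e 0) (e 1) (e 2) = 1) (u v : L) : κ u v (e 2) = heisForm e u v := by
  have hdiag (a b : L) : κ a a b = 0 := self_eq_neg.mp (hκ1 a a b)
  have hlast (a b : L) : κ a b b = 0 := self_eq_neg.mp (hκ2 a b b)
  have h10 : κ (e 1) (e 0) (e 2) = -1 := by rw [hκ1, hκval]
  have h2 (a : L) : κ (e 2) a (e 2) = 0 := by rw [hκ1, hlast, neg_zero]
  obtain ⟨a, b, c, rfl⟩ := e.exists_eq_fin_three u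
  obtain ⟨a', b', c', rfl⟩ := e.exists_eq_fin_three v
  rw [heisForm_fin_three]
  simp only [map_add, map_smul, LinearMap.add_apply, LinearMap.smul_apply, smul_eq_mul, hdiag,
    hlast, h10, h2, hκval]
  ring

theorem forall_map_lie_eq_iff_repr_add_repr (h01 : ⁅e 0, e 1⁆ = e 2) (h02 : ⁅e 0, e 2⁆ = 0)
    (h12 : ⁅e 1, e 2⁆ = 0) (lam : K) {p : L →ₗ[K] L} (hp : p (e 2) = 0) :
    (∀ u v : L, p ⁅u, v⁆ = ⁅p u, v⁆ + ⁅u, p v⁆ + (lam * heisForm e u v) • e 2) ↔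
      e.repr (p (e 0)) 0 + e.repr (p (e 1)) 1 = -lam := by
  simp only [lie_eq_heisForm_smul h01 h02 h12, map_smul, hp, smul_zero, ← add_smul,
    heisForm_map_add_heisForm_map e hp]
  refine ⟨fun h => ?_, fun h u v => by rw [h, neg_mul, neg_add_cancel, zero_smul]⟩
  have hxy := (h (e 0) (e 1)).symm
  simp only [heisForm, Basis.repr_self] at hxy
  simpa [e.ne_zero, add_eq_zero_iff_eq_neg] using hxy

end Heisenberg

/-- For the Heisenberg Lie algebra with basis `x = e 0`, `y = e 1`,
`z = e 2`, bracket `⁅x,y⁆ = z`, 3-cocycle `κ` with `κ(x,y,z) = 1`, `λ ≠ 0` and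
`π = (λ/2) z ⊗ z`, a linear map `π̃` satisfies `(π̃⊗id)(π) + (id⊗π̃)(π) = 0` and the
κ-corrected derivation property if and only if `π̃(z) = 0`, `π̃(x) = ax + by + cz`,
`π̃(y) = dx - (a+λ)y + ez` for some scalars `a b c d e`. -/
theorem stmt_4 {K : Type*} [Field K] [CharZero K]
    {L : Type*} [LieRing L] [LieAlgebra K L]
    (e : Module.Basis (Fin 3) K L)
    (h01 : ⁅e 0, e 1⁆ = e 2) (h02 : ⁅e 0, e 2⁆ = 0) (h12 : ⁅e 1, e 2⁆ = 0)
    (κ : L →ₗ[K] L →ₗ[K] L →ₗ[K] K)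
    (hκ1 : ∀ u v w : L, κ u v w = - κ v u w)
    (hκ2 : ∀ u v w : L, κ u v w = - κ u w v)
    (hκval : κ (e 0) (e 1) (e 2) = 1)
    (lam : K) (hlam : lam ≠ 0)
    (π : L ⊗[K] L)
    (hπ : π = (lam * (2 : K)⁻¹) • (e 2 ⊗ₜ[K] e 2))
    (p : L →ₗ[K] L) :
    ((LinearMap.rTensor L p + LinearMap.lTensor L p) π = 0 ∧
      ∀ u v : L,
        p ⁅u, v⁆ = ⁅p u, v⁆ + ⁅u, p v⁆
          + (TensorProduct.lid K L) (LinearMap.rTensor L (κ u v) π)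
          + (TensorProduct.rid K L) (LinearMap.lTensor L (κ u v) π))
    ↔ (p (e 2) = 0 ∧ ∃ a b c d f : K,
        p (e 0) = a • e 0 + b • e 1 + c • e 2 ∧
        p (e 1) = d • e 0 + (-(a + lam)) • e 1 + f • e 2) := by
  have hcorr (u v : L) : TensorProduct.lid K L (LinearMap.rTensor L (κ u v) π)
      + TensorProduct.rid K L (LinearMap.lTensor L (κ u v) π) = (lam * heisForm e u v) • e 2 := by
    rw [hπ, ← apply_apply_basis_two_eq_heisForm hκ1 hκ2 hκval]
    simp only [map_smul, LinearMap.rTensor_tmul, LinearMap.lTensor_tmul, lid_tmul, rid_tmul,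
      smul_smul, ← add_smul]
    congr 1
    ring
  have htensor : (LinearMap.rTensor L p + LinearMap.lTensor L p) π = 0 ↔ p (e 2) = 0 := by
    rw [hπ, map_smul, LinearMap.add_apply, LinearMap.rTensor_tmul, LinearMap.lTensor_tmul,
      smul_eq_zero_iff_right (mul_ne_zero hlam (by norm_num)),
      tmul_add_tmul_eq_zero_iff (e.ne_zero 2)]
  rw [htensor]
  refine and_congr_right fun hp => ?_
  rw [e.exists_fin_three_iff, ← forall_map_lie_eq_iff_repr_add_repr h01 h02 h12 lam hp]
  refine forall₂_congr fun u v => ?_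
  rw [add_assoc, hcorr]
end

section
/- Let π = (1/2)π^{ab} s³∂_a s³∂_b be a constant bivector on CE(g) for a finite-dimensional Lie algebra g with structure constants f^c_{ab}, where d(s³∂_a) = -f^c_{ab} θ^b s³∂_c and d(θ^a) = -(1/2) f^a_{bc} θ^b θ^c. Then the Schouten-Nijenhuis self-bracket {π,π} vanishes automatically, and dπ = 0 if and only if f^a_{cd} π^{db} + f^b_{cd} π^{ad} = 0 for all a, b, c. Hence 2-shifted Poisson structures on CE(g) correspond bijectively to invariant symmetric tensors in (Sym² g)^g. -/
noncomputable section

/-- A model of the (uncompleted) 2-shifted polyvector algebra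
`K[θ^a][s³∂_a]` on `CE(g)`: the monoid algebra on the commuting weight variables
`ξ_a = s³∂_a` (degree 2) with coefficients in the exterior algebra on the odd
generators `θ^a` (degree 1). -/
abbrev CEPol (K : Type*) [Field K] (n : ℕ) : Type _ :=
  AddMonoidAlgebra (ExteriorAlgebra K (Fin n → K)) (Fin n →₀ ℕ)

/-- The weight variable `ξ_a = s³∂_a`. -/
def xiVar (K : Type*) [Field K] (n : ℕ) (a : Fin n) : CEPol K n :=
  AddMonoidAlgebra.single (Finsupp.single a 1) 1

/-- The Chevalley-Eilenberg generator `θ^a`. -/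
def thetaVar (K : Type*) [Field K] (n : ℕ) (a : Fin n) : CEPol K n :=
  AddMonoidAlgebra.single 0 (ExteriorAlgebra.ι K (Pi.single a (1 : K)))

/-- A scalar from `K`, viewed as a constant of the polyvector algebra. -/
def scal (K : Type*) [Field K] (n : ℕ) (c : K) : CEPol K n :=
  AddMonoidAlgebra.single 0 (algebraMap K (ExteriorAlgebra K (Fin n → K)) c)

/-! Both claims are computations on the quadratic monomials `ξ_a ξ_b`. Two such monomials have
vanishing bracket by the biderivation rule, since `{ξ_a, ξ_b} = 0`. For the differential, the two
Leibniz terms of `d(ξ_a ξ_b)` contribute equally after summing against the symmetric `π`, so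
`dπ = -∑_{c,b} θ(∑_a π^{ab} f^c_{a·}) ξ_c ξ_b`. A sum `∑_{c,b} w_{cb} ξ_c ξ_b` vanishes exactly when
`w_{ab} + w_{ba} = 0` (the diagonal needs characteristic zero), and by antisymmetry of `f` this
symmetrisation is minus `f^a_{ce} π^{eb} + f^b_{ce} π^{ae}`. -/

open Finset

section PairMonomials

variable {ι M : Type*} [Fintype ι] [DecidableEq ι]

lemma sum_single_pair_apply [AddCommMonoid M] (w : ι → ι → M) (a b : ι) :
    (∑ c, ∑ e, Finsupp.single (Finsupp.single c 1 + Finsupp.single e 1 : ι →₀ ℕ) (w c e))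
      (Finsupp.single a 1 + Finsupp.single b 1) = if a = b then w a a else w a b + w b a := by
  simp only [Finsupp.finsetSum_apply, Finsupp.single_apply,
    Finsupp.single_add_single_eq_single_add_single one_ne_zero one_ne_zero]
  split_ifs with hab
  · subst hab
    simp [ite_and]
  · have hsplit : ∀ c e, (if c = a ∧ e = b ∨ c = b ∧ e = a then w c e else 0)
        = (if c = a ∧ e = b then w c e else 0) + (if c = b ∧ e = a then w c e else 0) := by
      grind
    simp [hsplit, sum_add_distrib, ite_and]

lemma sum_single_pair_eq_zero_iff [AddCommGroup M] [IsAddTorsionFree M] (w : ι → ι → M) :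
    ∑ c, ∑ e, Finsupp.single (Finsupp.single c 1 + Finsupp.single e 1 : ι →₀ ℕ) (w c e) = 0
      ↔ ∀ a b, w a b + w b a = 0 := by
  constructor
  · intro h a b
    have hab := sum_single_pair_apply w a b
    rw [h, Finsupp.zero_apply] at hab
    split_ifs at hab with heq
    · subst heq
      rw [← hab, add_zero]
    · exact hab.symm
  · intro h
    -- swapping the summation indices turns `w` into `-w`
    refine self_eq_neg.mp (calc
      _ = ∑ c, ∑ e, Finsupp.single (Finsupp.single e 1 + Finsupp.single c 1 : ι →₀ ℕ) (w e c) :=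
        sum_comm
      _ = _ := by
        simp only [← sum_neg_distrib, ← Finsupp.single_neg]
        refine sum_congr rfl fun c _ => sum_congr rfl fun e _ => ?_
        rw [add_comm, eq_neg_of_add_eq_zero_left (h e c)])

end PairMonomials

section PolyvectorAlgebra

variable {K : Type*} [Field K] {n : ℕ}

lemma scal_mul (c : K) (x : CEPol K n) : scal K n c * x = c • x :=
  (Algebra.smul_def c x).symm

/-- The element `w_b θ^b ξ^m` of the polyvector algebra, linear in `w`. -/
def thetaXi (m : Fin n →₀ ℕ) : (Fin n → K) →ₗ[K] CEPol K n :=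
  AddMonoidAlgebra.lsingle m ∘ₗ ExteriorAlgebra.ι K

lemma thetaXi_apply (m : Fin n →₀ ℕ) (w : Fin n → K) :
    thetaXi m w = AddMonoidAlgebra.single m (ExteriorAlgebra.ι K w) := rfl

lemma sum_scal_mul_thetaVar_mul_xiVar (w : Fin n → K) (c : Fin n) :
    ∑ b, scal K n (w b) * (thetaVar K n b * xiVar K n c) = thetaXi (Finsupp.single c 1) w := by
  have hθξ : ∀ b, thetaVar K n b * xiVar K n c = thetaXi (Finsupp.single c 1) (Pi.single b 1) := by
    intro b
    rw [thetaVar, xiVar, AddMonoidAlgebra.single_mul_single, zero_add, mul_one, thetaXi_apply]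
  simp only [hθξ, scal_mul, ← map_smul, ← map_sum, ← pi_eq_sum_univ']

lemma thetaXi_mul_xiVar (m : Fin n →₀ ℕ) (w : Fin n → K) (b : Fin n) :
    thetaXi m w * xiVar K n b = thetaXi (m + Finsupp.single b 1) w := by
  rw [thetaXi_apply, thetaXi_apply, xiVar, AddMonoidAlgebra.single_mul_single, mul_one]

lemma xiVar_mul_thetaXi (a : Fin n) (m : Fin n →₀ ℕ) (w : Fin n → K) :
    xiVar K n a * thetaXi m w = thetaXi (Finsupp.single a 1 + m) w := by
  rw [thetaXi_apply, thetaXi_apply, xiVar, AddMonoidAlgebra.single_mul_single, one_mul]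

lemma sum_thetaXi_pair_eq_zero_iff [CharZero K] (v : Fin n → Fin n → Fin n → K) :
    ∑ c, ∑ b, thetaXi (Finsupp.single c 1 + Finsupp.single b 1) (v c b) = 0
      ↔ ∀ a b, v a b + v b a = 0 := by
  have := IsAddTorsionFree.of_isTorsionFree K (ExteriorAlgebra K (Fin n → K))
  simp only [thetaXi_apply, ← AddMonoidAlgebra.coeff_inj, AddMonoidAlgebra.coeff_sum,
    AddMonoidAlgebra.coeff_single, AddMonoidAlgebra.coeff_zero, sum_single_pair_eq_zero_iff,
    ← map_add, ExteriorAlgebra.ι_eq_zero_iff]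

end PolyvectorAlgebra

section Differential

variable {K : Type*} [Field K] {n : ℕ} (f : Fin n → Fin n → Fin n → K)
  (d : CEPol K n →+ CEPol K n)

lemma deriv_xiVar_mul_xiVar
    (hdX : ∀ a, d (xiVar K n a)
      = - ∑ c, ∑ b, scal K n (f c a b) * (thetaVar K n b * xiVar K n c))
    (hdL : ∀ a b, d (xiVar K n a * xiVar K n b)
      = d (xiVar K n a) * xiVar K n b + xiVar K n a * d (xiVar K n b))
    (a b : Fin n) :
    d (xiVar K n a * xiVar K n b)
      = -(∑ c, thetaXi (Finsupp.single c 1 + Finsupp.single b 1) (f c a))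
        - ∑ c, thetaXi (Finsupp.single a 1 + Finsupp.single c 1) (f c b) := by
  simp only [hdL, hdX, sum_scal_mul_thetaVar_mul_xiVar, neg_mul, mul_neg, sum_mul, mul_sum,
    thetaXi_mul_xiVar, xiVar_mul_thetaXi, sub_eq_add_neg]

lemma deriv_bivector [NeZero (2 : K)]
    (hdX : ∀ a, d (xiVar K n a)
      = - ∑ c, ∑ b, scal K n (f c a b) * (thetaVar K n b * xiVar K n c))
    (hdL : ∀ a b, d (xiVar K n a * xiVar K n b)
      = d (xiVar K n a) * xiVar K n b + xiVar K n a * d (xiVar K n b))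
    (p : Fin n → Fin n → K) (hp : ∀ a b, p a b = p b a)
    (hdC : ∀ (c : K) (x : CEPol K n), d (scal K n c * x) = scal K n c * d x) :
    d (∑ a, ∑ b, scal K n ((2 : K)⁻¹ * p a b) * (xiVar K n a * xiVar K n b))
      = -∑ c, ∑ b, thetaXi (Finsupp.single c 1 + Finsupp.single b 1) (∑ a, p a b • f c a) := by
  set G : Fin n → Fin n → CEPol K n :=
    fun a b => p a b • ∑ c, thetaXi (Finsupp.single c 1 + Finsupp.single b 1) (f c a)
  have hterm : ∀ a b, d (scal K n ((2 : K)⁻¹ * p a b) * (xiVar K n a * xiVar K n b))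
      = -(2 : K)⁻¹ • (G a b + G b a) := by
    intro a b
    rw [hdC, deriv_xiVar_mul_xiVar f d hdX hdL, scal_mul]
    simp only [G, hp b a, add_comm (Finsupp.single a 1)]
    module
  calc _ = ∑ a, ∑ b, -(2 : K)⁻¹ • (G a b + G b a) := by simp only [map_sum, hterm]
    _ = -∑ a, ∑ b, G a b := by
      simp only [← smul_sum, sum_add_distrib]
      rw [sum_comm (f := fun a b => G b a), ← two_smul K, smul_smul, neg_mul,
        inv_mul_cancel₀ two_ne_zero, neg_one_smul]
    _ = _ := by
      simp only [G, smul_sum, ← map_smul, map_sum, neg_inj]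
      rw [sum_comm]
      conv_rhs => rw [sum_comm]
      exact sum_congr rfl fun b _ => sum_comm

end Differential

lemma biderivation_mul_mul_eq_zero {R ι : Type*} [NonUnitalNonAssocSemiring R]
    (S : R →+ R →+ R) (x : ι → R) (hxx : ∀ a b, S (x a) (x b) = 0)
    (hL₁ : ∀ a b y, S (x a * x b) y = x a * S (x b) y + S (x a) y * x b)
    (hL₂ : ∀ y a b, S y (x a * x b) = S y (x a) * x b + x a * S y (x b))
    (a b c e : ι) : S (x a * x b) (x c * x e) = 0 := by
  simp only [hL₁, hL₂, hxx, mul_zero, zero_mul, add_zero]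

theorem stmt_18_general {K : Type*} [Field K] [CharZero K] {n : ℕ}
    (f : Fin n → Fin n → Fin n → K)
    (hfanti : ∀ c a b, f c a b = - f c b a)
    (p : Fin n → Fin n → K) (hp : ∀ a b, p a b = p b a)
    (π : CEPol K n)
    (hπ : π = ∑ a, ∑ b, scal K n ((2 : K)⁻¹ * p a b) * (xiVar K n a * xiVar K n b))
    (d : CEPol K n →+ CEPol K n)
    (hdC : ∀ (c : K) (x : CEPol K n), d (scal K n c * x) = scal K n c * d x)
    (hdX : ∀ a, d (xiVar K n a)
        = - ∑ c, ∑ b, scal K n (f c a b) * (thetaVar K n b * xiVar K n c))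
    (hdL : ∀ a b, d (xiVar K n a * xiVar K n b)
        = d (xiVar K n a) * xiVar K n b + xiVar K n a * d (xiVar K n b))
    (S : CEPol K n →+ CEPol K n →+ CEPol K n)
    (hSC₁ : ∀ (c : K) (x y : CEPol K n), S (scal K n c * x) y = scal K n c * S x y)
    (hSC₂ : ∀ (c : K) (x y : CEPol K n), S x (scal K n c * y) = scal K n c * S x y)
    (hSxx : ∀ a b, S (xiVar K n a) (xiVar K n b) = 0)
    (hSL₁ : ∀ a b (y : CEPol K n), S (xiVar K n a * xiVar K n b) y
        = xiVar K n a * S (xiVar K n b) y + S (xiVar K n a) y * xiVar K n b)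
    (hSL₂ : ∀ (x : CEPol K n) (a b : Fin n), S x (xiVar K n a * xiVar K n b)
        = S x (xiVar K n a) * xiVar K n b + xiVar K n a * S x (xiVar K n b)) :
    S π π = 0 ∧
      (d π = 0 ↔ ∀ a b c, (∑ e, (f a c e * p e b + f b c e * p a e)) = 0) := by
  subst hπ
  refine ⟨?_, ?_⟩
  · simp only [map_sum, AddMonoidHom.finsetSum_apply, hSC₁, hSC₂,
      biderivation_mul_mul_eq_zero S (xiVar K n) hSxx hSL₁ hSL₂, mul_zero, sum_const_zero]
  · rw [deriv_bivector f d hdX hdL p hp hdC, neg_eq_zero, sum_thetaXi_pair_eq_zero_iff]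
    refine forall₂_congr fun a b => funext_iff.trans (forall_congr' fun c => ?_)
    have hcoord : (∑ e, p e b • f a e + ∑ e, p e a • f b e) c
        = -∑ e, (f a c e * p e b + f b c e * p a e) := by
      simp only [Pi.add_apply, Finset.sum_apply, Pi.smul_apply, smul_eq_mul, ← sum_add_distrib,
        ← sum_neg_distrib]
      refine sum_congr rfl fun e _ => ?_
      rw [hfanti a e c, hfanti b e c, hp a e]
      ring
    rw [hcoord, Pi.zero_apply, neg_eq_zero]

/-- Let `π = (1/2) π^{ab} s³∂_a s³∂_b` be a constant bivector on
`CE(g)` for an `n`-dimensional Lie algebra with structure constants `f`.  For any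
additive differential `d` which is `K`-linear, satisfies the Leibniz rule on the
(even) weight generators and takes the Chevalley-Eilenberg values
`d(θ^a) = -(1/2) f^a_{bc} θ^b θ^c`, `d(s³∂_a) = -f^c_{ab} θ^b s³∂_c` on generators,
and any Schouten-Nijenhuis-type bracket `S` (biadditive, `K`-bilinear, a
biderivation on the even weight generators, vanishing on pairs of weight
generators), one has: the self-bracket `{π,π} = S π π` vanishes automatically, and
`d π = 0` if and only if `f^a_{cd} π^{db} + f^b_{cd} π^{ad} = 0` for all `a b c`.
Hence 2-shifted Poisson structures on `CE(g)` correspond exactly to invariant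
symmetric tensors. -/
theorem stmt_18 {K : Type*} [Field K] [CharZero K] {n : ℕ}
    (f : Fin n → Fin n → Fin n → K)
    (hfanti : ∀ c a b, f c a b = - f c b a)
    (hjac : ∀ a b c e : Fin n,
      (∑ d, (f e d a * f d b c + f e d b * f d c a + f e d c * f d a b)) = 0)
    (p : Fin n → Fin n → K) (hp : ∀ a b, p a b = p b a)
    (π : CEPol K n)
    (hπ : π = ∑ a, ∑ b, scal K n ((2 : K)⁻¹ * p a b) * (xiVar K n a * xiVar K n b))
    (d : CEPol K n →+ CEPol K n)
    (hdC : ∀ (c : K) (x : CEPol K n), d (scal K n c * x) = scal K n c * d x)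
    (hdθ : ∀ a, d (thetaVar K n a)
        = - ∑ b, ∑ c, scal K n ((2 : K)⁻¹ * f a b c)
            * (thetaVar K n b * thetaVar K n c))
    (hdX : ∀ a, d (xiVar K n a)
        = - ∑ c, ∑ b, scal K n (f c a b) * (thetaVar K n b * xiVar K n c))
    (hdL : ∀ a b, d (xiVar K n a * xiVar K n b)
        = d (xiVar K n a) * xiVar K n b + xiVar K n a * d (xiVar K n b))
    (S : CEPol K n →+ CEPol K n →+ CEPol K n)
    (hSC₁ : ∀ (c : K) (x y : CEPol K n), S (scal K n c * x) y = scal K n c * S x y)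
    (hSC₂ : ∀ (c : K) (x y : CEPol K n), S x (scal K n c * y) = scal K n c * S x y)
    (hSxx : ∀ a b, S (xiVar K n a) (xiVar K n b) = 0)
    (hSL₁ : ∀ a b (y : CEPol K n), S (xiVar K n a * xiVar K n b) y
        = xiVar K n a * S (xiVar K n b) y + S (xiVar K n a) y * xiVar K n b)
    (hSL₂ : ∀ (x : CEPol K n) (a b : Fin n), S x (xiVar K n a * xiVar K n b)
        = S x (xiVar K n a) * xiVar K n b + xiVar K n a * S x (xiVar K n b)) :
    S π π = 0 ∧
      (d π = 0 ↔ ∀ a b c, (∑ e, (f a c e * p e b + f b c e * p a e)) = 0) :=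
  stmt_18_general f hfanti p hp π hπ d hdC hdX hdL S hSC₁ hSC₂ hSxx hSL₁ hSL₂
end
end
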